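/- If T₁, T₂ are CP maps X → B(H) with T = T₁ + T₂, and there is a projection P ∈ π_T(X)′ implementing T₁ and T₂ (i.e. T₁ = V_T* P π_T(·) V_T, T₂ = V_T*(1−P)π_T(·)V_T), then the minimal Stinespring representation of T is unitarily equivalent to the direct sum of minimal Stinespring representations of T₁ and T₂. -/

import Mathlib

open scoped ComplexOrder InnerProductSpace

noncomputable section

/-- A matrix over a star ring is positive if it is of the form `Nᴴ * N`. -/
def MatPos {A : Type*} [Ring A] [StarRing A] {n : ℕ}
    (M : Matrix (Fin n) (Fin n) A) : Prop :=
  ∃ N : Matrix (Fin n) (Fin n) A, M = N.conjTranspose * N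

/-- `T` is completely positive if the induced entrywise maps on matrices are positive. -/
def CompletelyPositiveFun {A B : Type*} [Ring A] [StarRing A] [Ring B] [StarRing B]
    (T : A → B) : Prop :=
  ∀ (n : ℕ) (M : Matrix (Fin n) (Fin n) A), MatPos M → MatPos (M.map T)

/-- `(π, K, V)` is a Stinespring representation of `T : X → B(H)`:
`T x = V* (π x) V` for all `x`. -/
def IsStinespring {X : Type*} [NormedRing X] [StarRing X] [CStarRing X]
    [NormedAlgebra ℂ X] [StarModule ℂ X]
    {H K : Type*} [NormedAddCommGroup H] [InnerProductSpace ℂ H] [CompleteSpace H]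
    [NormedAddCommGroup K] [InnerProductSpace ℂ K] [CompleteSpace K]
    (T : X → (H →L[ℂ] H)) (π : X →⋆ₐ[ℂ] (K →L[ℂ] K)) (V : H →L[ℂ] K) : Prop :=
  ∀ x : X, T x = (ContinuousLinearMap.adjoint V).comp ((π x).comp V)

/-- Minimality: the closed linear span of `π(X) V H` is all of `K`. -/
def IsMinimalStinespring {X : Type*} [NormedRing X] [StarRing X] [CStarRing X]
    [NormedAlgebra ℂ X] [StarModule ℂ X]
    {H K : Type*} [NormedAddCommGroup H] [InnerProductSpace ℂ H] [CompleteSpace H]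
    [NormedAddCommGroup K] [InnerProductSpace ℂ K] [CompleteSpace K]
    (π : X →⋆ₐ[ℂ] (K →L[ℂ] K)) (V : H →L[ℂ] K) : Prop :=
  (Submodule.span ℂ {k : K | ∃ (x : X) (h : H), k = π x (V h)}).topologicalClosure = ⊤

/-!
A minimal Stinespring dilation `(π', V')` of `T` embeds isometrically and equivariantly into
every Stinespring dilation `(π, V)` of `T`: the inner products of the vectors `π x (V h)` are
`⟪h, T (star x * y) g⟫`, so `π' x (V' h) ↦ π x (V h)` is a well-defined isometry on a dense
subspace. As `P` commutes with `π`, `(π, P V)` and `(π, (1 - P) V)` are dilations of `T₁` and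
`T₂`, so `K₁` embeds into `P K` and `K₂` into `(1 - P) K`. Together the two embeddings map
`K₁ ⊕ K₂` onto a closed `π`-invariant subspace containing `V H`, which is `K` by minimality.
-/

open scoped TensorProduct

namespace LinearMap

variable {𝕜 E Eₗ F : Type*} [NormedDivisionRing 𝕜] [AddCommGroup E] [Module 𝕜 E]
  [NormedAddCommGroup Eₗ] [Module 𝕜 Eₗ] [IsBoundedSMul 𝕜 Eₗ]
  [NormedAddCommGroup F] [Module 𝕜 F] [IsBoundedSMul 𝕜 F] [CompleteSpace F]

def extendOfIsometry (f : E →ₗ[𝕜] F) (e : E →ₗ[𝕜] Eₗ) (h_dense : DenseRange e)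
    (h_norm : ∀ x, ‖f x‖ = ‖e x‖) : Eₗ →ₗᵢ[𝕜] F where
  toLinearMap := (f.extendOfNorm e).toLinearMap
  norm_map' := by
    refine h_dense.induction ?_ (isClosed_eq (by fun_prop) continuous_norm)
    rintro _ ⟨x, rfl⟩
    rw [ContinuousLinearMap.coe_coe,
      extendOfNorm_eq h_dense ⟨1, fun x => by rw [one_mul, h_norm]⟩, h_norm]

@[simp]
theorem extendOfIsometry_eq (f : E →ₗ[𝕜] F) (e : E →ₗ[𝕜] Eₗ) (h_dense : DenseRange e)
    (h_norm : ∀ x, ‖f x‖ = ‖e x‖) (x : E) : f.extendOfIsometry e h_dense h_norm (e x) = f x :=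
  extendOfNorm_eq h_dense ⟨1, fun x => by rw [one_mul, h_norm]⟩ x

end LinearMap

namespace LinearIsometry

variable {𝕜 E E₁ E₂ : Type*} [RCLike 𝕜] [NormedAddCommGroup E] [InnerProductSpace 𝕜 E]
  [NormedAddCommGroup E₁] [InnerProductSpace 𝕜 E₁] [NormedAddCommGroup E₂] [InnerProductSpace 𝕜 E₂]

def coprod (W₁ : E₁ →ₗᵢ[𝕜] E) (W₂ : E₂ →ₗᵢ[𝕜] E) (h : ∀ a b, ⟪W₁ a, W₂ b⟫_𝕜 = 0) :
    WithLp 2 (E₁ × E₂) →ₗᵢ[𝕜] E where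
  toLinearMap :=
    (W₁.toLinearMap.coprod W₂.toLinearMap).comp (WithLp.linearEquiv 2 𝕜 (E₁ × E₂)).toLinearMap
  norm_map' x := by
    rw [← sq_eq_sq₀ (norm_nonneg _) (norm_nonneg _), WithLp.prod_norm_sq_eq_of_L2, sq, sq, sq]
    simpa using norm_add_sq_eq_norm_sq_add_norm_sq_of_inner_eq_zero _ _ (h x.fst x.snd)

@[simp]
theorem coprod_apply (W₁ : E₁ →ₗᵢ[𝕜] E) (W₂ : E₂ →ₗᵢ[𝕜] E) (h : ∀ a b, ⟪W₁ a, W₂ b⟫_𝕜 = 0)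
    (x : WithLp 2 (E₁ × E₂)) : W₁.coprod W₂ h x = W₁ x.fst + W₂ x.snd :=
  rfl

end LinearIsometry

theorem IsStarProjection.inner_eq_zero {𝕜 E : Type*} [RCLike 𝕜] [NormedAddCommGroup E]
    [InnerProductSpace 𝕜 E] [CompleteSpace E] {P : E →L[𝕜] E} (hP : IsStarProjection P)
    {a b : E} (ha : P a = a) (hb : P b = 0) : ⟪a, b⟫_𝕜 = 0 := by
  rw [← ha, ← ContinuousLinearMap.adjoint_inner_right, hP.isSelfAdjoint.adjoint_eq, hb,
    inner_zero_right]

section Stinespring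

open ContinuousLinearMap (adjoint)

section StinespringMap

variable {X H K : Type*} [Ring X] [Star X] [Algebra ℂ X] [NormedAddCommGroup H] [NormedSpace ℂ H]
  [NormedAddCommGroup K] [InnerProductSpace ℂ K] [CompleteSpace K]

def stinespringMap (π : X →⋆ₐ[ℂ] (K →L[ℂ] K)) (V : H →L[ℂ] K) : X ⊗[ℂ] H →ₗ[ℂ] K :=
  TensorProduct.lift <| LinearMap.mk₂ ℂ (fun x h => π x (V h))
    (fun _ _ _ => by simp) (fun _ _ _ => by simp) (fun _ _ _ => by simp) (fun _ _ _ => by simp)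

@[simp]
theorem stinespringMap_tmul (π : X →⋆ₐ[ℂ] (K →L[ℂ] K)) (V : H →L[ℂ] K) (x : X) (h : H) :
    stinespringMap π V (x ⊗ₜ h) = π x (V h) :=
  rfl

theorem stinespringMap_rTensor_mulLeft (π : X →⋆ₐ[ℂ] (K →L[ℂ] K)) (V : H →L[ℂ] K) (x : X)
    (t : X ⊗[ℂ] H) :
    stinespringMap π V (LinearMap.rTensor H (LinearMap.mulLeft ℂ x) t) =
      π x (stinespringMap π V t) := by
  induction t using TensorProduct.induction_on with
  | zero => simp
  | tmul y h => simp
  | add s t hs ht => simp only [map_add, hs, ht]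

theorem range_stinespringMap (π : X →⋆ₐ[ℂ] (K →L[ℂ] K)) (V : H →L[ℂ] K) :
    LinearMap.range (stinespringMap π V) =
      Submodule.span ℂ {k : K | ∃ (x : X) (h : H), k = π x (V h)} := by
  rw [LinearMap.range_eq_map, ← TensorProduct.span_tmul_eq_top, Submodule.map_span]
  congr 1
  ext k
  constructor
  · rintro ⟨_, ⟨x, h, rfl⟩, rfl⟩
    exact ⟨x, h, rfl⟩
  · rintro ⟨x, h, rfl⟩
    exact ⟨_, ⟨x, h, rfl⟩, rfl⟩

end StinespringMap

variable {X H K K' : Type*} [NormedRing X] [StarRing X] [CStarRing X]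
  [NormedAlgebra ℂ X] [StarModule ℂ X]
  [NormedAddCommGroup H] [InnerProductSpace ℂ H] [CompleteSpace H]
  [NormedAddCommGroup K] [InnerProductSpace ℂ K] [CompleteSpace K]
  [NormedAddCommGroup K'] [InnerProductSpace ℂ K'] [CompleteSpace K']

theorem IsMinimalStinespring.denseRange_stinespringMap {π : X →⋆ₐ[ℂ] (K →L[ℂ] K)}
    {V : H →L[ℂ] K} (hmin : IsMinimalStinespring π V) : DenseRange (stinespringMap π V) := by
  rw [DenseRange, ← LinearMap.coe_range, range_stinespringMap]
  exact Submodule.dense_iff_topologicalClosure_eq_top.mpr hmin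

theorem IsMinimalStinespring.mem_of_isClosed {π : X →⋆ₐ[ℂ] (K →L[ℂ] K)} {V : H →L[ℂ] K}
    (hmin : IsMinimalStinespring π V) {C : Submodule ℂ K} (hC : IsClosed (C : Set K))
    (hgen : ∀ x h, π x (V h) ∈ C) (k : K) : k ∈ C := by
  have hspan : Submodule.span ℂ {k : K | ∃ (x : X) (h : H), k = π x (V h)} ≤ C := by
    rw [Submodule.span_le]
    rintro _ ⟨x, h, rfl⟩
    exact hgen x h
  exact Submodule.topologicalClosure_minimal _ hspan hC (Submodule.eq_top_iff'.mp hmin k)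

theorem IsStinespring.inner_stinespringMap_tmul {T : X → (H →L[ℂ] H)}
    {π : X →⋆ₐ[ℂ] (K →L[ℂ] K)} {V : H →L[ℂ] K} (hst : IsStinespring T π V) (x y : X)
    (h g : H) :
    ⟪stinespringMap π V (x ⊗ₜ h), stinespringMap π V (y ⊗ₜ g)⟫_ℂ = ⟪h, T (star x * y) g⟫_ℂ := by
  have hadj : adjoint (π x) = π (star x) := by rw [map_star, ContinuousLinearMap.star_eq_adjoint]
  rw [stinespringMap_tmul, stinespringMap_tmul, ← ContinuousLinearMap.adjoint_inner_right, hadj,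
    ← ContinuousLinearMap.adjoint_inner_right, hst, map_mul]
  rfl

theorem IsStinespring.inner_stinespringMap_eq {T : X → (H →L[ℂ] H)}
    {π : X →⋆ₐ[ℂ] (K →L[ℂ] K)} {V : H →L[ℂ] K} {π' : X →⋆ₐ[ℂ] (K' →L[ℂ] K')} {V' : H →L[ℂ] K'}
    (hst : IsStinespring T π V) (hst' : IsStinespring T π' V') (s t : X ⊗[ℂ] H) :
    ⟪stinespringMap π V s, stinespringMap π V t⟫_ℂ =
      ⟪stinespringMap π' V' s, stinespringMap π' V' t⟫_ℂ := by
  induction s using TensorProduct.induction_on with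
  | zero => simp
  | add s₁ s₂ h₁ h₂ => simp only [map_add, inner_add_left, h₁, h₂]
  | tmul x h =>
    induction t using TensorProduct.induction_on with
    | zero => simp
    | add t₁ t₂ h₁ h₂ => simp only [map_add, inner_add_right, h₁, h₂]
    | tmul y g => rw [hst.inner_stinespringMap_tmul, hst'.inner_stinespringMap_tmul]

theorem IsStinespring.norm_stinespringMap_eq {T : X → (H →L[ℂ] H)}
    {π : X →⋆ₐ[ℂ] (K →L[ℂ] K)} {V : H →L[ℂ] K} {π' : X →⋆ₐ[ℂ] (K' →L[ℂ] K')} {V' : H →L[ℂ] K'}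
    (hst : IsStinespring T π V) (hst' : IsStinespring T π' V') (t : X ⊗[ℂ] H) :
    ‖stinespringMap π V t‖ = ‖stinespringMap π' V' t‖ := by
  rw [@norm_eq_sqrt_re_inner ℂ, @norm_eq_sqrt_re_inner ℂ, hst.inner_stinespringMap_eq hst']

theorem IsStinespring.exists_linearIsometry_of_isMinimal {T : X → (H →L[ℂ] H)}
    {π' : X →⋆ₐ[ℂ] (K' →L[ℂ] K')} {V' : H →L[ℂ] K'} (hst' : IsStinespring T π' V')
    (hmin' : IsMinimalStinespring π' V') {π : X →⋆ₐ[ℂ] (K →L[ℂ] K)} {V : H →L[ℂ] K}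
    (hst : IsStinespring T π V) :
    ∃ W : K' →ₗᵢ[ℂ] K, (∀ h, W (V' h) = V h) ∧ ∀ x k, W (π' x k) = π x (W k) := by
  have hdense := hmin'.denseRange_stinespringMap
  set W := (stinespringMap π V).extendOfIsometry _ hdense (hst.norm_stinespringMap_eq hst')
  have hW (t : X ⊗[ℂ] H) : W (stinespringMap π' V' t) = stinespringMap π V t :=
    LinearMap.extendOfIsometry_eq _ _ _ _ t
  refine ⟨W, fun h => by simpa using hW (1 ⊗ₜ h), fun x k => ?_⟩
  refine hdense.induction_on k (isClosed_eq (by fun_prop) (by fun_prop)) fun t => ?_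
  rw [← stinespringMap_rTensor_mulLeft, hW, hW, stinespringMap_rTensor_mulLeft]

theorem IsStinespring.comp_of_isStarProjection {T : X → (H →L[ℂ] H)}
    {π : X →⋆ₐ[ℂ] (K →L[ℂ] K)} {V : H →L[ℂ] K} {Q : K →L[ℂ] K} (hQ : IsStarProjection Q)
    (hcomm : ∀ x, Commute Q (π x)) (hT : ∀ x, T x = adjoint V ∘L Q ∘L π x ∘L V) :
    IsStinespring T π (Q ∘L V) := by
  intro x
  rw [hT, ContinuousLinearMap.adjoint_comp, hQ.isSelfAdjoint.adjoint_eq]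
  ext h
  have hQπ : π x (Q (V h)) = Q (π x (V h)) := congr($(hcomm x) (V h)).symm
  have hQQ (k : K) : Q (Q k) = Q k := congr($(hQ.isIdempotentElem.eq) k)
  simp only [ContinuousLinearMap.comp_apply, hQπ, hQQ]

theorem IsStinespring.exists_linearIsometry_of_isStarProjection {T : X → (H →L[ℂ] H)}
    {π' : X →⋆ₐ[ℂ] (K' →L[ℂ] K')} {V' : H →L[ℂ] K'} (hst' : IsStinespring T π' V')
    (hmin' : IsMinimalStinespring π' V') {π : X →⋆ₐ[ℂ] (K →L[ℂ] K)} {V : H →L[ℂ] K}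
    {Q : K →L[ℂ] K} (hQ : IsStarProjection Q) (hcomm : ∀ x, Commute Q (π x))
    (hT : ∀ x, T x = adjoint V ∘L Q ∘L π x ∘L V) :
    ∃ W : K' →ₗᵢ[ℂ] K, (∀ h, W (V' h) = Q (V h)) ∧ (∀ x k, W (π' x k) = π x (W k)) ∧
      ∀ k, Q (W k) = W k := by
  obtain ⟨W, hWV, hWπ⟩ :=
    hst'.exists_linearIsometry_of_isMinimal hmin' (.comp_of_isStarProjection hQ hcomm hT)
  refine ⟨W, hWV, hWπ, fun k => ?_⟩
  have hfix := hmin'.mem_of_isClosed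
    (ContinuousLinearMap.isClosed_ker (W.toContinuousLinearMap - Q ∘L W.toContinuousLinearMap))
    (fun x h => ?_) k
  · exact (sub_eq_zero.mp (LinearMap.mem_ker.mp hfix : W k - Q (W k) = 0)).symm
  · have hQπQ : Q * π x * Q = π x * Q := by rw [(hcomm x).eq, mul_assoc, hQ.isIdempotentElem.eq]
    simpa [hWπ, hWV, sub_eq_zero] using congr($hQπQ (V h)).symm

end Stinespring

theorem minimal_stinespring_direct_sum_general
    {X : Type*} [NormedRing X] [StarRing X] [CStarRing X]
    [NormedAlgebra ℂ X] [StarModule ℂ X]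
    {H K K₁ K₂ : Type*} [NormedAddCommGroup H] [InnerProductSpace ℂ H] [CompleteSpace H]
    [NormedAddCommGroup K] [InnerProductSpace ℂ K] [CompleteSpace K]
    [NormedAddCommGroup K₁] [InnerProductSpace ℂ K₁] [CompleteSpace K₁]
    [NormedAddCommGroup K₂] [InnerProductSpace ℂ K₂] [CompleteSpace K₂]
    (T₁ T₂ : X →ₗ[ℂ] (H →L[ℂ] H))
    (π : X →⋆ₐ[ℂ] (K →L[ℂ] K)) (V : H →L[ℂ] K)
    (hmin : IsMinimalStinespring π V)
    (P : K →L[ℂ] K) (hproj : IsIdempotentElem P) (hsa : IsSelfAdjoint P)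
    (hcomm : ∀ x : X, P * π x = π x * P)
    (h₁ : ∀ x : X, T₁ x = (ContinuousLinearMap.adjoint V).comp (P.comp ((π x).comp V)))
    (h₂ : ∀ x : X, T₂ x =
      (ContinuousLinearMap.adjoint V).comp ((1 - P).comp ((π x).comp V)))
    (π₁ : X →⋆ₐ[ℂ] (K₁ →L[ℂ] K₁)) (V₁ : H →L[ℂ] K₁)
    (hst₁ : IsStinespring (⇑T₁) π₁ V₁) (hmin₁ : IsMinimalStinespring π₁ V₁)
    (π₂ : X →⋆ₐ[ℂ] (K₂ →L[ℂ] K₂)) (V₂ : H →L[ℂ] K₂)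
    (hst₂ : IsStinespring (⇑T₂) π₂ V₂) (hmin₂ : IsMinimalStinespring π₂ V₂) :
    ∃ U : K ≃ₗᵢ[ℂ] WithLp 2 (K₁ × K₂),
      (∀ h : H, WithLp.equiv 2 (K₁ × K₂) (U (V h)) = (V₁ h, V₂ h)) ∧
      ∀ (x : X) (k : K),
        WithLp.equiv 2 (K₁ × K₂) (U (π x k)) =
          (π₁ x (WithLp.equiv 2 (K₁ × K₂) (U k)).1,
           π₂ x (WithLp.equiv 2 (K₁ × K₂) (U k)).2) := by
  have hP : IsStarProjection P := ⟨hproj, hsa⟩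
  obtain ⟨W₁, hWV₁, hWπ₁, hPW₁⟩ :=
    hst₁.exists_linearIsometry_of_isStarProjection hmin₁ hP hcomm h₁
  obtain ⟨W₂, hWV₂, hWπ₂, hPW₂⟩ := hst₂.exists_linearIsometry_of_isStarProjection hmin₂ hP.one_sub
    (fun x => (Commute.one_left _).sub_left (hcomm x)) h₂
  let Φ := W₁.coprod W₂ fun a b => hP.inner_eq_zero (hPW₁ a) (by simpa using hPW₂ b)
  have hΦV (h : H) : Φ (WithLp.toLp 2 (V₁ h, V₂ h)) = V h := by simp [Φ, hWV₁, hWV₂]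
  have hΦπ (x : X) (p : WithLp 2 (K₁ × K₂)) :
      Φ (WithLp.toLp 2 (π₁ x p.fst, π₂ x p.snd)) = π x (Φ p) := by simp [Φ, hWπ₁, hWπ₂]
  have hΦ : Function.Surjective Φ := by
    refine fun k => hmin.mem_of_isClosed (C := LinearMap.range Φ.toLinearMap) ?_ (fun x h => ?_) k
    · rw [LinearMap.coe_range]
      exact Φ.isometry.isClosedEmbedding.isClosed_range
    · exact ⟨_, (hΦπ x _).trans (congrArg (π x) (hΦV h))⟩
  let U := (LinearIsometryEquiv.ofSurjective Φ hΦ).symm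
  have hU (p : WithLp 2 (K₁ × K₂)) : U (Φ p) = p := U.apply_symm_apply p
  refine ⟨U, fun h => ?_, fun x k => ?_⟩
  · rw [← hΦV h, hU]
    rfl
  · obtain ⟨p, rfl⟩ := hΦ k
    rw [← hΦπ, hU, hU]
    rfl

/-- If `T = T₁ + T₂` and a projection `P ∈ π(X)′` implements `T₁` and `T₂` in a minimal
Stinespring representation `(π, K, V)` of `T`, then `(π, K, V)` is unitarily equivalent
to the direct sum of minimal Stinespring representations of `T₁` and `T₂`. -/
theorem minimal_stinespring_direct_sum
    {X : Type*} [NormedRing X] [StarRing X] [CStarRing X]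
    [NormedAlgebra ℂ X] [StarModule ℂ X]
    {H K K₁ K₂ : Type*} [NormedAddCommGroup H] [InnerProductSpace ℂ H] [CompleteSpace H]
    [NormedAddCommGroup K] [InnerProductSpace ℂ K] [CompleteSpace K]
    [NormedAddCommGroup K₁] [InnerProductSpace ℂ K₁] [CompleteSpace K₁]
    [NormedAddCommGroup K₂] [InnerProductSpace ℂ K₂] [CompleteSpace K₂]
    (T₁ T₂ : X →ₗ[ℂ] (H →L[ℂ] H))
    (hT₁ : CompletelyPositiveFun (⇑T₁)) (hT₂ : CompletelyPositiveFun (⇑T₂))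
    (π : X →⋆ₐ[ℂ] (K →L[ℂ] K)) (V : H →L[ℂ] K)
    (hst : IsStinespring (fun x => T₁ x + T₂ x) π V) (hmin : IsMinimalStinespring π V)
    (P : K →L[ℂ] K) (hproj : IsIdempotentElem P) (hsa : IsSelfAdjoint P)
    (hcomm : ∀ x : X, P * π x = π x * P)
    (h₁ : ∀ x : X, T₁ x = (ContinuousLinearMap.adjoint V).comp (P.comp ((π x).comp V)))
    (h₂ : ∀ x : X, T₂ x =
      (ContinuousLinearMap.adjoint V).comp ((1 - P).comp ((π x).comp V)))
    (π₁ : X →⋆ₐ[ℂ] (K₁ →L[ℂ] K₁)) (V₁ : H →L[ℂ] K₁)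
    (hst₁ : IsStinespring (⇑T₁) π₁ V₁) (hmin₁ : IsMinimalStinespring π₁ V₁)
    (π₂ : X →⋆ₐ[ℂ] (K₂ →L[ℂ] K₂)) (V₂ : H →L[ℂ] K₂)
    (hst₂ : IsStinespring (⇑T₂) π₂ V₂) (hmin₂ : IsMinimalStinespring π₂ V₂) :
    ∃ U : K ≃ₗᵢ[ℂ] WithLp 2 (K₁ × K₂),
      (∀ h : H, WithLp.equiv 2 (K₁ × K₂) (U (V h)) = (V₁ h, V₂ h)) ∧
      ∀ (x : X) (k : K),
        WithLp.equiv 2 (K₁ × K₂) (U (π x k)) =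
          (π₁ x (WithLp.equiv 2 (K₁ × K₂) (U k)).1,
           π₂ x (WithLp.equiv 2 (K₁ × K₂) (U k)).2) :=
  minimal_stinespring_direct_sum_general T₁ T₂ π V hmin P hproj hsa hcomm h₁ h₂ π₁ V₁ hst₁ hmin₁ π₂
    V₂ hst₂ hmin₂
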